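/- arXiv:1708.08098 — 2 statements merged into one kernel-verified Lean document; each statement's English description precedes it below -/
import Mathlib

section
/- Assume all unit production costs are equal: c_t = c > 0 for every t. If there exists a feasible plan maximizing the final capital B_T over all feasible plans, then there also exists a feasible plan maximizing B_T that in addition satisfies the zero-inventory-ordering property I_t · y_{t+1} = 0 for every t = 1,…,T−1 (whenever production is launched in period t+1, the entering inventory I_t is zero). -/
noncomputable def setupInd (x : ℝ) : ℝ := if 0 < x then 1 else 0

noncomputable def wSeq (d : ℕ → ℝ) (β : ℝ) (v : ℕ → ℝ) : ℕ → ℝ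
  | 0 => 0
  | t + 1 => max 0 (d (t + 1) - β * wSeq d β v t) - v (t + 1)

noncomputable def EdSeq (d : ℕ → ℝ) (β : ℝ) (v : ℕ → ℝ) (t : ℕ) : ℝ :=
  max 0 (d t - β * wSeq d β v (t - 1))

noncomputable def ISeq (y v : ℕ → ℝ) (m t : ℕ) : ℝ :=
  ∑ j ∈ Finset.Icc m t, (y j - v j)

noncomputable def BSeq (p h s c : ℕ → ℝ) (R : ℝ) (TL : ℕ) (y v : ℕ → ℝ)
    (m : ℕ) (Binit : ℝ) : ℕ → ℝ
  | 0 => Binit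
  | t + 1 =>
    if t + 1 < m then Binit
    else
      BSeq p h s c R TL y v m Binit t + p (t + 1) * v (t + 1)
        - h (t + 1) * ISeq y v m (t + 1)
        - s (t + 1) * setupInd (y (t + 1))
        - c (t + 1) * y (t + 1)
        - (if t + 1 = TL then R else 0)

/-- Feasibility of a full-horizon plan (periods 1..T). -/
def Feasible (T : ℕ) (d p c h s : ℕ → ℝ) (β B0 R : ℝ) (TL : ℕ)
    (y v : ℕ → ℝ) : Prop :=
  ∀ t, 1 ≤ t → t ≤ T →
    0 ≤ y t ∧ 0 ≤ v t ∧ v t ≤ EdSeq d β v t ∧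
    0 ≤ ISeq y v 1 t ∧
    s t * setupInd (y t) + c t * y t ≤ BSeq p h s c R TL y v 1 B0 (t - 1) ∧
    0 ≤ BSeq p h s c R TL y v 1 B0 t

/-- Feasibility of a plan on periods m..n, β = 0 case (sales bounded by demand),
with initial inventory 0 and initial capital `Binit`. -/
def FeasibleSeg (m n : ℕ) (d p c h s : ℕ → ℝ) (R : ℝ) (TL : ℕ) (Binit : ℝ)
    (y v : ℕ → ℝ) : Prop :=
  ∀ t, m ≤ t → t ≤ n →
    0 ≤ y t ∧ 0 ≤ v t ∧ v t ≤ d t ∧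
    0 ≤ ISeq y v m t ∧
    s t * setupInd (y t) + c t * y t ≤ BSeq p h s c R TL y v m Binit (t - 1) ∧
    0 ≤ BSeq p h s c R TL y v m Binit t

lemma ISeq_zero' (y v : ℕ → ℝ) : ISeq y v 1 0 = 0 := by simp [ISeq]

lemma ISeq_succ (y v : ℕ → ℝ) (j : ℕ) :
    ISeq y v 1 (j+1) = ISeq y v 1 j + (y (j+1) - v (j+1)) := by
  unfold ISeq
  rw [Finset.sum_Icc_succ_top (by omega : (1:ℕ) ≤ j+1)]

lemma BSeq_succ (p h s c : ℕ → ℝ) (R : ℝ) (TL : ℕ) (y v : ℕ → ℝ) (B0 : ℝ) (j : ℕ) :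
    BSeq p h s c R TL y v 1 B0 (j+1) =
      BSeq p h s c R TL y v 1 B0 j + p (j+1) * v (j+1)
        - h (j+1) * ISeq y v 1 (j+1) - s (j+1) * setupInd (y (j+1))
        - c (j+1) * y (j+1) - (if j+1 = TL then R else 0) := by
  rw [BSeq]
  simp

lemma setupInd_nonneg (x : ℝ) : 0 ≤ setupInd x := by
  unfold setupInd; split_ifs <;> norm_num

lemma setupInd_mono {a b : ℝ} (hab : a ≤ b) : setupInd a ≤ setupInd b := by
  unfold setupInd
  split_ifs with h1 h2 <;> try norm_num
  · linarith

noncomputable def Cfun (y v : ℕ → ℝ) (t j : ℕ) : ℝ :=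
  (Finset.Icc (min j t) t).inf' (Finset.nonempty_Icc.mpr (min_le_right j t))
    (fun k => ISeq y v 1 k)

lemma Cfun_le (y v : ℕ → ℝ) (t j : ℕ) (hj : j ≤ t) :
    Cfun y v t j ≤ ISeq y v 1 j := by
  apply Finset.inf'_le
  simp [Finset.mem_Icc]
  omega

lemma Cfun_nonneg (y v : ℕ → ℝ) (t : ℕ)
    (hI : ∀ k, k ≤ t → 0 ≤ ISeq y v 1 k) (j : ℕ) : 0 ≤ Cfun y v t j := by
  apply Finset.le_inf'
  intro k hk
  exact hI k (Finset.mem_Icc.mp hk).2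

lemma Cfun_zero (y v : ℕ → ℝ) (t : ℕ)
    (hI : ∀ k, k ≤ t → 0 ≤ ISeq y v 1 k) : Cfun y v t 0 = 0 := by
  refine le_antisymm ?_ (Cfun_nonneg y v t hI 0)
  have := Cfun_le y v t 0 (by omega)
  rwa [ISeq_zero'] at this

lemma Cfun_top (y v : ℕ → ℝ) (t j : ℕ) (hj : t ≤ j) :
    Cfun y v t j = ISeq y v 1 t := by
  apply le_antisymm
  · apply Finset.inf'_le; simp [Finset.mem_Icc]
  · apply Finset.le_inf'
    intro k hk
    simp [Finset.mem_Icc] at hk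
    have : k = t := by omega
    rw [this]

lemma Cfun_pred (y v : ℕ → ℝ) (t j : ℕ) (h1 : 1 ≤ j) (hj : j ≤ t) :
    Cfun y v t (j-1) = min (ISeq y v 1 (j-1)) (Cfun y v t j) := by
  apply le_antisymm
  · apply le_min
    · apply Finset.inf'_le; simp [Finset.mem_Icc]; omega
    · apply Finset.le_inf'
      intro k hk
      apply Finset.inf'_le
      simp [Finset.mem_Icc] at hk ⊢
      omega
  · apply Finset.le_inf'
    intro k hk
    simp [Finset.mem_Icc] at hk
    by_cases hkj : k = j - 1
    · rw [hkj]; exact min_le_left _ _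
    · refine le_trans (min_le_right _ _) (Finset.inf'_le _ ?_)
      simp [Finset.mem_Icc]
      omega

lemma Cfun_diff_nonneg (y v : ℕ → ℝ) (t j : ℕ) (h1 : 1 ≤ j) (hj : j ≤ t) :
    0 ≤ Cfun y v t j - Cfun y v t (j-1) := by
  rw [Cfun_pred y v t j h1 hj]
  have := min_le_right (ISeq y v 1 (j-1)) (Cfun y v t j)
  linarith

lemma Cfun_diff_le (y v : ℕ → ℝ) (t j : ℕ) (h1 : 1 ≤ j) (hj : j ≤ t)
    (hy : 0 ≤ y j) (hv : 0 ≤ v j) :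
    Cfun y v t j - Cfun y v t (j-1) ≤ y j := by
  rw [Cfun_pred y v t j h1 hj]
  rcases min_cases (ISeq y v 1 (j-1)) (Cfun y v t j) with ⟨he, _⟩ | ⟨he, _⟩
  · rw [he]
    have hCle := Cfun_le y v t j hj
    have hIs : ISeq y v 1 j = ISeq y v 1 (j-1) + (y j - v j) := by
      have : j = (j-1) + 1 := by omega
      rw [this, ISeq_succ]
      congr 1 <;> omega
    linarith
  · rw [he]; linarith

noncomputable def yFix (y v : ℕ → ℝ) (t : ℕ) (j : ℕ) : ℝ :=
  if j ≤ t then y j - (Cfun y v t j - Cfun y v t (j-1))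
  else if j = t+1 then y j + Cfun y v t t
  else y j

lemma yFix_of_le (y v : ℕ → ℝ) (t j : ℕ) (hj : j ≤ t) :
    yFix y v t j = y j - (Cfun y v t j - Cfun y v t (j-1)) := if_pos hj

lemma yFix_succ_t (y v : ℕ → ℝ) (t : ℕ) :
    yFix y v t (t+1) = y (t+1) + Cfun y v t t := by
  unfold yFix
  rw [if_neg (by omega), if_pos rfl]

lemma yFix_of_gt (y v : ℕ → ℝ) (t j : ℕ) (hj : t + 1 < j) : yFix y v t j = y j := by
  unfold yFix
  rw [if_neg (by omega), if_neg (by omega)]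

lemma ISeq_yFix_le (y v : ℕ → ℝ) (t : ℕ)
    (hI : ∀ k, k ≤ t → 0 ≤ ISeq y v 1 k) :
    ∀ τ, τ ≤ t → ISeq (yFix y v t) v 1 τ = ISeq y v 1 τ - Cfun y v t τ := by
  intro τ
  induction τ with
  | zero => intro _; rw [ISeq_zero', ISeq_zero', Cfun_zero y v t hI]; ring
  | succ j ih =>
    intro hj
    rw [ISeq_succ, ISeq_succ, ih (by omega), yFix_of_le y v t (j+1) hj]
    have : j + 1 - 1 = j := by omega
    rw [this]
    ring

lemma ISeq_yFix_ge (y v : ℕ → ℝ) (t : ℕ)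
    (hI : ∀ k, k ≤ t → 0 ≤ ISeq y v 1 k) :
    ∀ τ, t < τ → ISeq (yFix y v t) v 1 τ = ISeq y v 1 τ := by
  intro τ hτ
  induction τ with
  | zero => omega
  | succ j ih =>
    by_cases hjt : j = t
    · subst hjt
      rw [ISeq_succ, ISeq_succ, ISeq_yFix_le y v j hI j le_rfl, yFix_succ_t]
      ring
    · rw [ISeq_succ, ISeq_succ, ih (by omega), yFix_of_gt y v t (j+1) (by omega)]

lemma BSeq_yFix_le (p h s c : ℕ → ℝ) (c0 R B0 : ℝ) (TL t : ℕ) (y v : ℕ → ℝ)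
    (hceq : ∀ k, c k = c0) (hh : ∀ k, 0 ≤ h k) (hs : ∀ k, 0 ≤ s k)
    (hc0 : 0 ≤ c0) (hI : ∀ k, k ≤ t → 0 ≤ ISeq y v 1 k) :
    ∀ τ, τ ≤ t →
      BSeq p h s c R TL y v 1 B0 τ + c0 * Cfun y v t τ
        ≤ BSeq p h s c R TL (yFix y v t) v 1 B0 τ := by
  intro τ
  induction τ with
  | zero =>
    intro _
    rw [Cfun_zero y v t hI]
    simp [BSeq]
  | succ j ih =>
    intro hj
    have ihj := ih (by omega)
    have hpred : j + 1 - 1 = j := by omega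
    have hD : 0 ≤ Cfun y v t (j+1) - Cfun y v t j := by
      have := Cfun_diff_nonneg y v t (j+1) (by omega) hj
      rwa [hpred] at this
    have hyf : yFix y v t (j+1) = y (j+1) - (Cfun y v t (j+1) - Cfun y v t j) := by
      rw [yFix_of_le y v t (j+1) hj, hpred]
    have hsetup : s (j+1) * setupInd (yFix y v t (j+1)) ≤ s (j+1) * setupInd (y (j+1)) := by
      apply mul_le_mul_of_nonneg_left _ (hs (j+1))
      apply setupInd_mono
      rw [hyf]; linarith
    have hIC : ISeq (yFix y v t) v 1 (j+1) = ISeq y v 1 (j+1) - Cfun y v t (j+1) :=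
      ISeq_yFix_le y v t hI (j+1) hj
    have hhC : 0 ≤ h (j+1) * Cfun y v t (j+1) :=
      mul_nonneg (hh (j+1)) (Cfun_nonneg y v t hI (j+1))
    rw [BSeq_succ, BSeq_succ, hIC, hyf, hceq (j+1)]
    have : c0 * (y (j+1) - (Cfun y v t (j+1) - Cfun y v t j))
        = c0 * y (j+1) - c0 * Cfun y v t (j+1) + c0 * Cfun y v t j := by ring
    rw [this]
    have hexp : h (j+1) * (ISeq y v 1 (j+1) - Cfun y v t (j+1))
        = h (j+1) * ISeq y v 1 (j+1) - h (j+1) * Cfun y v t (j+1) := by ring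
    rw [hexp]
    rw [hyf] at hsetup
    linarith

lemma BSeq_yFix_ge (p h s c : ℕ → ℝ) (c0 R B0 : ℝ) (TL t : ℕ) (y v : ℕ → ℝ)
    (hceq : ∀ k, c k = c0) (hh : ∀ k, 0 ≤ h k) (hs : ∀ k, 0 ≤ s k)
    (hc0 : 0 ≤ c0) (hI : ∀ k, k ≤ t → 0 ≤ ISeq y v 1 k)
    (ht1 : 1 ≤ t) (hy : 0 < y (t+1)) :
    ∀ τ, t < τ →
      BSeq p h s c R TL y v 1 B0 τ ≤ BSeq p h s c R TL (yFix y v t) v 1 B0 τ := by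
  intro τ hτ
  induction τ with
  | zero => omega
  | succ j ih =>
    by_cases hjt : j = t
    · rw [hjt]
      have hCt : 0 ≤ Cfun y v t t := Cfun_nonneg y v t hI t
      have hsetup : setupInd (yFix y v t (t+1)) = setupInd (y (t+1)) := by
        rw [yFix_succ_t]
        unfold setupInd
        rw [if_pos hy, if_pos (by linarith)]
      have hIC : ISeq (yFix y v t) v 1 (t+1) = ISeq y v 1 (t+1) :=
        ISeq_yFix_ge y v t hI (t+1) (by omega)
      have hBt := BSeq_yFix_le p h s c c0 R B0 TL t y v hceq hh hs hc0 hI t le_rfl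
      rw [Cfun_top y v t t le_rfl] at hBt
      rw [BSeq_succ, BSeq_succ, hIC, hsetup, yFix_succ_t, hceq (t+1),
        Cfun_top y v t t le_rfl]
      have : c0 * (y (t+1) + ISeq y v 1 t)
          = c0 * y (t+1) + c0 * ISeq y v 1 t := by ring
      rw [this]
      linarith
    · have hIC : ISeq (yFix y v t) v 1 (j+1) = ISeq y v 1 (j+1) :=
        ISeq_yFix_ge y v t hI (j+1) (by omega)
      rw [BSeq_succ, BSeq_succ, hIC, yFix_of_gt y v t (j+1) (by omega)]
      have := ih (by omega)
      linarith

lemma fix_one (T : ℕ) (d p c h s : ℕ → ℝ) (c0 : ℝ)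
    (hceq : ∀ k, c k = c0) (hc0 : 0 < c0)
    (hh : ∀ k, 0 ≤ h k) (hs : ∀ k, 0 ≤ s k)
    (β B0 R : ℝ) (TL : ℕ) (y v : ℕ → ℝ)
    (hfeas : Feasible T d p c h s β B0 R TL y v)
    (t : ℕ) (ht1 : 1 ≤ t) (ht2 : t + 1 ≤ T) (hy : 0 < y (t+1)) :
    Feasible T d p c h s β B0 R TL (yFix y v t) v ∧
    BSeq p h s c R TL y v 1 B0 T ≤ BSeq p h s c R TL (yFix y v t) v 1 B0 T ∧
    ISeq (yFix y v t) v 1 t = 0 ∧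
    (∀ j, t + 1 < j → yFix y v t j = y j) ∧
    (∀ j, t < j → ISeq (yFix y v t) v 1 j = ISeq y v 1 j) := by
  have hc0' : (0:ℝ) ≤ c0 := le_of_lt hc0
  have hI : ∀ k, k ≤ t → 0 ≤ ISeq y v 1 k := by
    intro k hk
    rcases Nat.eq_zero_or_pos k with hk0 | hk1
    · rw [hk0, ISeq_zero']
    · exact (hfeas k hk1 (by omega)).2.2.2.1
  have hBle := BSeq_yFix_le p h s c c0 R B0 TL t y v hceq hh hs hc0' hI
  have hBge := BSeq_yFix_ge p h s c c0 R B0 TL t y v hceq hh hs hc0' hI ht1 hy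
  have hCnn := Cfun_nonneg y v t hI
  refine ⟨?_, hBge T (by omega), ?_, fun j hj => yFix_of_gt y v t j hj,
    fun j hj => ISeq_yFix_ge y v t hI j hj⟩
  · intro τ h1τ hτT
    obtain ⟨hy0, hv0, hvE, hI0, hcap, hBnn⟩ := hfeas τ h1τ hτT
    rcases lt_trichotomy τ (t+1) with hτ | hτ | hτ
    · -- τ ≤ t
      have hτt : τ ≤ t := by omega
      have hDle := Cfun_diff_le y v t τ h1τ hτt hy0 hv0
      have hDnn := Cfun_diff_nonneg y v t τ h1τ hτt
      have hyf := yFix_of_le y v t τ hτt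
      refine ⟨by rw [hyf]; linarith, hv0, hvE, ?_, ?_, ?_⟩
      · rw [ISeq_yFix_le y v t hI τ hτt]
        have := Cfun_le y v t τ hτt
        linarith
      · have h2 : s τ * setupInd (yFix y v t τ) ≤ s τ * setupInd (y τ) := by
          apply mul_le_mul_of_nonneg_left _ (hs τ)
          apply setupInd_mono
          rw [hyf]; linarith
        have h3 : c τ * yFix y v t τ ≤ c τ * y τ := by
          rw [hceq τ, hyf]
          nlinarith
        have h4 := hBle (τ-1) (by omega)
        have h5 : 0 ≤ c0 * Cfun y v t (τ-1) := mul_nonneg hc0' (hCnn (τ-1))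
        linarith
      · have := hBle τ hτt
        have h5 : 0 ≤ c0 * Cfun y v t τ := mul_nonneg hc0' (hCnn τ)
        linarith
    · -- τ = t+1
      subst hτ
      have hsetup : setupInd (yFix y v t (t+1)) = setupInd (y (t+1)) := by
        rw [yFix_succ_t]
        unfold setupInd
        rw [if_pos hy, if_pos (by have := hCnn t; linarith)]
      refine ⟨by rw [yFix_succ_t]; have := hCnn t; linarith, hv0, hvE, ?_, ?_, ?_⟩
      · rw [ISeq_yFix_ge y v t hI (t+1) (by omega)]; exact hI0
      · have h4 := hBle t le_rfl
        have hpred : t + 1 - 1 = t := by omega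
        rw [hpred] at hcap ⊢
        rw [hsetup, yFix_succ_t, hceq (t+1)]
        have hexp : c0 * (y (t+1) + Cfun y v t t)
            = c0 * y (t+1) + c0 * Cfun y v t t := by ring
        rw [hexp]
        rw [hceq (t+1)] at hcap
        linarith
      · have := hBge (t+1) (by omega)
        linarith
    · -- τ > t+1
      have hyf := yFix_of_gt y v t τ hτ
      refine ⟨by rw [hyf]; exact hy0, hv0, hvE, ?_, ?_, ?_⟩
      · rw [ISeq_yFix_ge y v t hI τ (by omega)]; exact hI0
      · rw [hyf]
        have := hBge (τ-1) (by omega)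
        linarith
      · have := hBge τ (by omega)
        linarith
  · rw [ISeq_yFix_le y v t hI t le_rfl, Cfun_top y v t t le_rfl]
    ring

lemma descent (T : ℕ) (d p c h s : ℕ → ℝ) (c0 : ℝ)
    (hceq : ∀ k, c k = c0) (hc0 : 0 < c0)
    (hh : ∀ k, 0 ≤ h k) (hs : ∀ k, 0 ≤ s k)
    (β B0 R : ℝ) (TL : ℕ) :
    ∀ k : ℕ, ∀ y v : ℕ → ℝ, Feasible T d p c h s β B0 R TL y v →
    (∀ w u : ℕ → ℝ, Feasible T d p c h s β B0 R TL w u →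
      BSeq p h s c R TL w u 1 B0 T ≤ BSeq p h s c R TL y v 1 B0 T) →
    (∀ τ, 1 ≤ τ → τ + 1 ≤ T → k ≤ τ → ISeq y v 1 τ * y (τ+1) = 0) →
    ∃ yh vh : ℕ → ℝ,
      Feasible T d p c h s β B0 R TL yh vh ∧
      (∀ w u : ℕ → ℝ, Feasible T d p c h s β B0 R TL w u →
        BSeq p h s c R TL w u 1 B0 T ≤ BSeq p h s c R TL yh vh 1 B0 T) ∧
      (∀ τ, 1 ≤ τ → τ + 1 ≤ T → ISeq yh vh 1 τ * yh (τ+1) = 0) := by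
  intro k
  induction k with
  | zero =>
    intro y v hf hopt hz
    exact ⟨y, v, hf, hopt, fun τ h1 h2 => hz τ h1 h2 (by omega)⟩
  | succ k ih =>
    intro y v hf hopt hz
    by_cases hk : 1 ≤ k ∧ k + 1 ≤ T
    · by_cases hviol : ISeq y v 1 k * y (k+1) = 0
      · apply ih y v hf hopt
        intro τ h1 h2 hkτ
        rcases Nat.eq_or_lt_of_le hkτ with he | hl
        · rw [← he]; exact hviol
        · exact hz τ h1 h2 (by omega)
      · have hy0 : 0 ≤ y (k+1) := (hf (k+1) (by omega) (by omega)).1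
        have hypos : 0 < y (k+1) := by
          rcases lt_or_eq_of_le hy0 with hlt | heq
          · exact hlt
          · exact absurd (by rw [← heq]; ring) hviol
        obtain ⟨hf', hB', hIz, hyeq, hIeq⟩ :=
          fix_one T d p c h s c0 hceq hc0 hh hs β B0 R TL y v hf k hk.1 hk.2 hypos
        apply ih (yFix y v k) v hf'
        · intro w u hfw
          exact le_trans (hopt w u hfw) hB'
        · intro τ h1 h2 hkτ
          rcases Nat.eq_or_lt_of_le hkτ with he | hl
          · rw [← he, hIz]; ring
          · rw [hIeq τ hl, hyeq (τ+1) (by omega)]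
            exact hz τ h1 h2 (by omega)
    · apply ih y v hf hopt
      intro τ h1 h2 hkτ
      apply hz τ h1 h2
      omega

/-- if a feasible plan maximizing the final capital `B_T` exists, then
one exists that also satisfies the zero-inventory-ordering property. -/
theorem stmt1 (T : ℕ) (hT : 1 ≤ T) (d p c h s : ℕ → ℝ) (c0 : ℝ)
    (hceq : ∀ t, c t = c0) (hc0 : 0 < c0)
    (hd : ∀ t, 0 ≤ d t) (hp : ∀ t, 0 ≤ p t) (hh : ∀ t, 0 ≤ h t) (hs : ∀ t, 0 ≤ s t)
    (β : ℝ) (hβ0 : 0 ≤ β) (hβ1 : β ≤ 1)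
    (B0 R : ℝ) (hB0 : 0 ≤ B0) (hR : 0 ≤ R)
    (TL : ℕ) (hTL1 : 1 ≤ TL) (hTL2 : TL ≤ T)
    (hmax : ∃ ystar vstar : ℕ → ℝ,
      Feasible T d p c h s β B0 R TL ystar vstar ∧
      ∀ y v : ℕ → ℝ, Feasible T d p c h s β B0 R TL y v →
        BSeq p h s c R TL y v 1 B0 T ≤ BSeq p h s c R TL ystar vstar 1 B0 T) :
    ∃ yh vh : ℕ → ℝ,
      Feasible T d p c h s β B0 R TL yh vh ∧
      (∀ y v : ℕ → ℝ, Feasible T d p c h s β B0 R TL y v →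
        BSeq p h s c R TL y v 1 B0 T ≤ BSeq p h s c R TL yh vh 1 B0 T) ∧
      (∀ t, 1 ≤ t → t + 1 ≤ T → ISeq yh vh 1 t * yh (t + 1) = 0) := by
  obtain ⟨ys, vs, hfs, hopt⟩ := hmax
  exact descent T d p c h s c0 hceq hc0 hh hs β B0 R TL T ys vs hfs hopt
    (fun τ h1 h2 h3 => absurd h2 (by omega))
end

section
/- Assume β = 0 and that all unit production costs are equal: c_t = c > 0 for every t. Fix t ∈ {1,…,T}. Suppose the set of feasible plans on periods 1..t with ending inventory I_t = 0 is nonempty and that the maximum 𝔅 of B_t over this set is attained. Then the supremum of the final capital B_T over all feasible plans on periods 1..T satisfying I_t = 0 equals 𝔅 + g_{t+1}(0, 𝔅). -/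
/-- Backward value function for the β = 0 model: `gVal T d p c h s R TL k I B` is
`g_{T+1-k}(I,B)` (in `EReal`, `sSup ∅ = ⊥`). -/
noncomputable def gVal (T : ℕ) (d p c h s : ℕ → ℝ) (R : ℝ) (TL : ℕ) :
    ℕ → ℝ → ℝ → EReal
  | 0 => fun _ _ => 0
  | k + 1 => fun I B =>
    sSup {x : EReal | ∃ yy vv Bn : ℝ,
      0 ≤ yy ∧ 0 ≤ vv ∧ vv ≤ d (T - k) ∧
      s (T - k) * setupInd yy + c (T - k) * yy ≤ B ∧
      0 ≤ I + yy - vv ∧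
      Bn = B + p (T - k) * vv - h (T - k) * (I + yy - vv)
        - s (T - k) * setupInd yy - c (T - k) * yy
        - (if T - k = TL then R else 0) ∧
      0 ≤ Bn ∧
      x = ((Bn - B : ℝ) : EReal) + gVal T d p c h s R TL k (I + yy - vv) Bn}

/-! ### Auxiliary development -/

noncomputable def BSeqI (p h s c : ℕ → ℝ) (R : ℝ) (TL : ℕ) (y v : ℕ → ℝ)
    (m : ℕ) (I0 Binit : ℝ) : ℕ → ℝ
  | 0 => Binit
  | t + 1 =>
    if t + 1 < m then Binit
    else
      BSeqI p h s c R TL y v m I0 Binit t + p (t + 1) * v (t + 1)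
        - h (t + 1) * (I0 + ISeq y v m (t + 1))
        - s (t + 1) * setupInd (y (t + 1))
        - c (t + 1) * y (t + 1)
        - (if t + 1 = TL then R else 0)

def FeasSegI (d p c h s : ℕ → ℝ) (R : ℝ) (TL : ℕ) (m n : ℕ) (I0 Binit : ℝ)
    (y v : ℕ → ℝ) : Prop :=
  ∀ t, m ≤ t → t ≤ n →
    0 ≤ y t ∧ 0 ≤ v t ∧ v t ≤ d t ∧
    0 ≤ I0 + ISeq y v m t ∧
    s t * setupInd (y t) + c t * y t ≤ BSeqI p h s c R TL y v m I0 Binit (t - 1) ∧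
    0 ≤ BSeqI p h s c R TL y v m I0 Binit t

lemma ISeq_empty (y v : ℕ → ℝ) {m t : ℕ} (h : t < m) : ISeq y v m t = 0 := by
  unfold ISeq
  rw [Finset.Icc_eq_empty (by omega)]; simp

lemma BSeqI_lt (p h s c : ℕ → ℝ) (R : ℝ) (TL : ℕ) (y v : ℕ → ℝ)
    (m : ℕ) (I0 B : ℝ) {n : ℕ} (hn : n < m) :
    BSeqI p h s c R TL y v m I0 B n = B := by
  cases n with
  | zero => rfl
  | succ k => rw [BSeqI, if_pos hn]

lemma ISeq_split (y v : ℕ → ℝ) {m t0 n : ℕ} (h1 : 1 ≤ m) (h2 : m ≤ t0 + 1)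
    (h3 : t0 ≤ n) : ISeq y v m n = ISeq y v m t0 + ISeq y v (t0 + 1) n := by
  unfold ISeq
  obtain ⟨m', rfl⟩ : ∃ m', m = m' + 1 := ⟨m - 1, by omega⟩
  rw [Finset.Icc_add_one_left_eq_Ioc, Finset.Icc_add_one_left_eq_Ioc, Finset.Icc_add_one_left_eq_Ioc,
    ← Finset.sum_Ioc_consecutive _ (by omega : m' ≤ t0) h3]

lemma ISeq_single (y v : ℕ → ℝ) (m : ℕ) : ISeq y v m m = y m - v m := by
  unfold ISeq; rw [Finset.Icc_self, Finset.sum_singleton]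

lemma BSeqI_shift (p h s c : ℕ → ℝ) (R : ℝ) (TL : ℕ) (y v : ℕ → ℝ)
    (m : ℕ) (I0 B Δ : ℝ) : ∀ n, BSeqI p h s c R TL y v m I0 (B + Δ) n
      = BSeqI p h s c R TL y v m I0 B n + Δ := by
  intro n
  induction n with
  | zero => rfl
  | succ k ih =>
    rw [BSeqI, BSeqI]
    split
    · rfl
    · rw [ih]; ring

lemma ISeq_congr {y v y' v' : ℕ → ℝ} {m n : ℕ}
    (hy : ∀ j, m ≤ j → j ≤ n → y j = y' j) (hv : ∀ j, m ≤ j → j ≤ n → v j = v' j) :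
    ISeq y v m n = ISeq y' v' m n := by
  unfold ISeq
  refine Finset.sum_congr rfl fun j hj => ?_
  rw [Finset.mem_Icc] at hj
  rw [hy j hj.1 hj.2, hv j hj.1 hj.2]

lemma BSeqI_congr (p h s c : ℕ → ℝ) (R : ℝ) (TL : ℕ) {y v y' v' : ℕ → ℝ}
    (m : ℕ) (I0 B : ℝ) {n : ℕ}
    (hy : ∀ j, m ≤ j → j ≤ n → y j = y' j) (hv : ∀ j, m ≤ j → j ≤ n → v j = v' j) :
    BSeqI p h s c R TL y v m I0 B n = BSeqI p h s c R TL y' v' m I0 B n := by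
  induction n with
  | zero => rfl
  | succ k ih =>
    rw [BSeqI, BSeqI]
    split
    · rfl
    · rw [ih (fun j h1 h2 => hy j h1 (by omega)) (fun j h1 h2 => hv j h1 (by omega)),
        hy (k+1) (by omega) le_rfl, hv (k+1) (by omega) le_rfl,
        ISeq_congr hy hv]

lemma BSeqI_at_start (p h s c : ℕ → ℝ) (R : ℝ) (TL : ℕ) (y v : ℕ → ℝ)
    {m : ℕ} (hm : 1 ≤ m) (I0 B : ℝ) :
    BSeqI p h s c R TL y v m I0 B m
      = B + p m * v m - h m * (I0 + (y m - v m)) - s m * setupInd (y m)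
        - c m * y m - (if m = TL then R else 0) := by
  obtain ⟨m', rfl⟩ : ∃ m', m = m' + 1 := ⟨m - 1, by omega⟩
  rw [BSeqI, if_neg (show ¬(m' + 1 < m' + 1) by omega),
    BSeqI_lt p h s c R TL y v (m' + 1) I0 B (by omega), ISeq_single]

lemma BSeqI_restart (p h s c : ℕ → ℝ) (R : ℝ) (TL : ℕ) (y v : ℕ → ℝ)
    {m : ℕ} (hm1 : 1 ≤ m) (I0 B : ℝ) {t0 : ℕ} (hm2 : m ≤ t0 + 1) :
    ∀ n, t0 ≤ n →
      BSeqI p h s c R TL y v (t0 + 1) (I0 + ISeq y v m t0)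
        (BSeqI p h s c R TL y v m I0 B t0) n
      = BSeqI p h s c R TL y v m I0 B n := by
  intro n hn
  induction n, hn using Nat.le_induction with
  | base => exact BSeqI_lt p h s c R TL y v (t0 + 1) _ _ (by omega)
  | succ k hk ih =>
    rw [BSeqI, if_neg (show ¬(k + 1 < t0 + 1) by omega), BSeqI,
      if_neg (show ¬(k + 1 < m) by omega), ih,
      ISeq_split y v hm1 hm2 (by omega : t0 ≤ k + 1)]
    ring

lemma BSeqI_zero (p h s c : ℕ → ℝ) (R : ℝ) (TL : ℕ) (y v : ℕ → ℝ)
    (m : ℕ) (B : ℝ) : ∀ n, BSeqI p h s c R TL y v m 0 B n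
      = BSeq p h s c R TL y v m B n := by
  intro n
  induction n with
  | zero => rfl
  | succ k ih =>
    rw [BSeqI, BSeq]
    split
    · rfl
    · rw [ih, zero_add]

lemma FeasSegI_zero (d p c h s : ℕ → ℝ) (R : ℝ) (TL : ℕ) (m n : ℕ) (B : ℝ)
    (y v : ℕ → ℝ) :
    FeasSegI d p c h s R TL m n 0 B y v ↔ FeasibleSeg m n d p c h s R TL B y v := by
  unfold FeasSegI FeasibleSeg
  simp only [BSeqI_zero, zero_add]

lemma ereal_cancel (r : ℝ) (x : EReal) : (r : EReal) + ((-r : ℝ) + x) = x := by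
  induction x using EReal.rec with
  | bot => simp
  | coe a => rw [← EReal.coe_add, ← EReal.coe_add]; norm_num
  | top => simp [EReal.coe_add_top]

lemma ereal_add_sSup (r : ℝ) (S : Set EReal) :
    (r : EReal) + sSup S = sSup ((fun a => (r : EReal) + a) '' S) := by
  apply le_antisymm
  · have h1 : sSup S ≤ ((-r : ℝ) : EReal) + sSup ((fun a => (r : EReal) + a) '' S) := by
      refine sSup_le fun a ha => ?_
      have h2 : a = ((-r : ℝ) : EReal) + ((r : EReal) + a) := by
        rw [show ((r:ℝ):EReal) = ((-(-r):ℝ):EReal) by norm_num, ereal_cancel (-r)]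
      rw [h2]
      exact add_le_add_right (le_sSup (Set.mem_image_of_mem _ ha)) _
    calc (r : EReal) + sSup S ≤ (r:EReal) + (((-r : ℝ) : EReal) + sSup _) :=
          add_le_add_right h1 _
      _ = _ := ereal_cancel r _
  · refine sSup_le ?_
    rintro b ⟨a, ha, rfl⟩
    exact add_le_add_right (le_sSup ha) _

lemma gVal_eq (T : ℕ) (d p c h s : ℕ → ℝ) (R : ℝ) (TL : ℕ) :
    ∀ k, k ≤ T → ∀ I B : ℝ,
    gVal T d p c h s R TL k I B =
      sSup {x : EReal | ∃ y v : ℕ → ℝ,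
        FeasSegI d p c h s R TL (T - k + 1) T I B y v ∧
        x = ((BSeqI p h s c R TL y v (T - k + 1) I B T - B : ℝ) : EReal)} := by
  intro k
  induction k with
  | zero =>
    intro _ I B
    have hset : {x : EReal | ∃ y v : ℕ → ℝ,
        FeasSegI d p c h s R TL (T - 0 + 1) T I B y v ∧
        x = ((BSeqI p h s c R TL y v (T - 0 + 1) I B T - B : ℝ) : EReal)}
        = {(0 : EReal)} := by
      ext x
      simp only [Set.mem_setOf_eq, Set.mem_singleton_iff]
      constructor
      · rintro ⟨y, v, -, rfl⟩
        rw [BSeqI_lt p h s c R TL y v _ I B (by omega)]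
        norm_num
      · rintro rfl
        refine ⟨0, 0, fun τ h1 h2 => absurd (h1.trans h2) (by omega), ?_⟩
        rw [BSeqI_lt p h s c R TL _ _ _ I B (by omega)]
        norm_num
    rw [hset, sSup_singleton]
    simp [gVal]
  | succ k ih =>
    intro hk I B
    have hq1 : 1 ≤ T - k := by omega
    have hqT : T - k ≤ T := by omega
    rw [show T - (k + 1) + 1 = T - k from by omega]
    simp only [gVal]
    apply le_antisymm
    · -- gVal ≤ plan sup
      refine sSup_le ?_
      rintro x ⟨yy, vv, Bn, hyy, hvv, hvd, hbudget, hI', hBn, hBn0, rfl⟩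
      rw [ih (by omega), ereal_add_sSup]
      refine sSup_le ?_
      rintro b ⟨x', ⟨y2, v2, hfeas2, rfl⟩, rfl⟩
      set q := T - k with hqdef
      set y : ℕ → ℝ := Function.update y2 q yy with hydef
      set v : ℕ → ℝ := Function.update v2 q vv with hvdef
      have hyq : y q = yy := Function.update_self _ _ _
      have hvq : v q = vv := Function.update_self _ _ _
      have hy2 : ∀ j, q + 1 ≤ j → j ≤ T → y j = y2 j :=
        fun j h1 _ => Function.update_of_ne (by omega) _ _
      have hv2 : ∀ j, q + 1 ≤ j → j ≤ T → v j = v2 j :=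
        fun j h1 _ => Function.update_of_ne (by omega) _ _
      have e1 : I + ISeq y v q q = I + yy - vv := by
        rw [ISeq_single, hyq, hvq]; ring
      have hBq : BSeqI p h s c R TL y v q I B q = Bn := by
        rw [BSeqI_at_start p h s c R TL y v hq1 I B, hyq, hvq, hBn]; ring
      have hrest : ∀ n, q ≤ n →
          BSeqI p h s c R TL y v (q + 1) (I + yy - vv) Bn n
            = BSeqI p h s c R TL y v q I B n := by
        intro n hn
        have := BSeqI_restart p h s c R TL y v hq1 I B (by omega) n hn
        rwa [e1, hBq] at this
      have hcg : ∀ n, BSeqI p h s c R TL y v (q + 1) (I + yy - vv) Bn n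
          = BSeqI p h s c R TL y2 v2 (q + 1) (I + yy - vv) Bn n := by
        intro n
        exact BSeqI_congr p h s c R TL (q+1) _ _
          (fun j h1 _ => Function.update_of_ne (by omega) _ _)
          (fun j h1 _ => Function.update_of_ne (by omega) _ _)
      have hfeas : FeasSegI d p c h s R TL q T I B y v := by
        intro τ h1 h2
        rcases eq_or_lt_of_le h1 with rfl | hlt
        · refine ⟨by rw [hyq]; exact hyy, by rw [hvq]; exact hvv,
            by rw [hvq]; exact hvd, by rw [e1]; exact hI', ?_, ?_⟩
          · rw [BSeqI_lt p h s c R TL y v q I B (by omega), hyq]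
            exact hbudget
          · rw [hBq]; exact hBn0
        · obtain ⟨f1, f2, f3, f4, f5, f6⟩ := hfeas2 τ (by omega) h2
          have hyτ : y τ = y2 τ := hy2 τ (by omega) h2
          have hvτ : v τ = v2 τ := hv2 τ (by omega) h2
          have hIτ : I + ISeq y v q τ
              = (I + yy - vv) + ISeq y2 v2 (q + 1) τ := by
            rw [ISeq_split y v hq1 (by omega) (by omega : q ≤ τ), ISeq_single, hyq, hvq,
              ISeq_congr (fun j hj1 hj2 => hy2 j hj1 (hj2.trans h2))
                (fun j hj1 hj2 => hv2 j hj1 (hj2.trans h2))]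
            ring
          refine ⟨by rw [hyτ]; exact f1, by rw [hvτ]; exact f2,
            by rw [hvτ]; exact f3, by rw [hIτ]; exact f4, ?_, ?_⟩
          · rw [← hrest (τ - 1) (by omega), hcg, hyτ]
            exact f5
          · rw [← hrest τ (by omega), hcg]
            exact f6
      refine le_sSup ⟨y, v, hfeas, ?_⟩
      have hT' : BSeqI p h s c R TL y v q I B T
          = BSeqI p h s c R TL y2 v2 (q + 1) (I + yy - vv) Bn T := by
        rw [← hrest T hqT, hcg]
      show ((Bn - B : ℝ) : EReal)
          + ((BSeqI p h s c R TL y2 v2 (q + 1) (I + yy - vv) Bn T - Bn : ℝ) : EReal)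
        = ((BSeqI p h s c R TL y v q I B T - B : ℝ) : EReal)
      rw [hT', ← EReal.coe_add,
        show (Bn - B) + (BSeqI p h s c R TL y2 v2 (q + 1) (I + yy - vv) Bn T - Bn)
          = BSeqI p h s c R TL y2 v2 (q + 1) (I + yy - vv) Bn T - B from by ring]
    · -- plan sup ≤ gVal
      refine sSup_le ?_
      rintro x ⟨y, v, hfeas, rfl⟩
      set q := T - k with hqdef
      obtain ⟨f1, f2, f3, f4, f5, f6⟩ := hfeas q le_rfl hqT
      set Bn : ℝ := BSeqI p h s c R TL y v q I B q with hBndef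
      have hB' : BSeqI p h s c R TL y v q I B (q - 1) = B :=
        BSeqI_lt p h s c R TL y v q I B (by omega)
      rw [hB'] at f5
      have hI' : 0 ≤ I + y q - v q := by
        rw [ISeq_single] at f4; linarith
      have hBnval : Bn = B + p q * v q - h q * (I + y q - v q)
          - s q * setupInd (y q) - c q * y q - (if q = TL then R else 0) := by
        rw [hBndef, BSeqI_at_start p h s c R TL y v hq1 I B]; ring
      have e1 : I + ISeq y v q q = I + y q - v q := by
        rw [ISeq_single]; ring
      have hrest : ∀ n, q ≤ n →
          BSeqI p h s c R TL y v (q + 1) (I + y q - v q) Bn n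
            = BSeqI p h s c R TL y v q I B n := by
        intro n hn
        have := BSeqI_restart p h s c R TL y v hq1 I B (by omega) n hn
        rwa [e1] at this
      have hsuffix : FeasSegI d p c h s R TL (q + 1) T (I + y q - v q) Bn y v := by
        intro τ h1 h2
        obtain ⟨g1, g2, g3, g4, g5, g6⟩ := hfeas τ (by omega) h2
        have hIτ : (I + y q - v q) + ISeq y v (q + 1) τ = I + ISeq y v q τ := by
          rw [ISeq_split y v hq1 (by omega) (by omega : q ≤ τ), ISeq_single]; ring
        refine ⟨g1, g2, g3, by rw [hIτ]; exact g4, ?_, ?_⟩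
        · rw [hrest (τ - 1) (by omega)]
          exact g5
        · rw [hrest τ (by omega)]
          exact g6
      have hgv : ((BSeqI p h s c R TL y v q I B T - Bn : ℝ) : EReal)
          ≤ gVal T d p c h s R TL k (I + y q - v q) Bn := by
        rw [ih (by omega)]
        refine le_sSup ⟨y, v, hsuffix, ?_⟩
        rw [hrest T hqT]
      calc ((BSeqI p h s c R TL y v q I B T - B : ℝ) : EReal)
          = ((Bn - B : ℝ) : EReal)
            + ((BSeqI p h s c R TL y v q I B T - Bn : ℝ) : EReal) := by
            rw [← EReal.coe_add]; congr 1; ring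
        _ ≤ ((Bn - B : ℝ) : EReal) + gVal T d p c h s R TL k (I + y q - v q) Bn :=
            add_le_add_right hgv _
        _ ≤ _ := by
            refine le_sSup ?_
            exact ⟨y q, v q, Bn, f1, f2, f3, f5, hI', hBnval, f6, rfl⟩

/-- with β = 0 and constant unit production cost, if the maximum capital
`𝔅` at a zero-inventory period `t` is attained, then the optimal final capital among
plans with `I_t = 0` equals `𝔅 + g_{t+1}(0, 𝔅)`. -/
theorem stmt6 (T : ℕ) (hT : 1 ≤ T) (d p c h s : ℕ → ℝ) (c0 : ℝ)
    (hceq : ∀ t, c t = c0) (hc0 : 0 < c0)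
    (hd : ∀ t, 0 ≤ d t) (hp : ∀ t, 0 ≤ p t) (hh : ∀ t, 0 ≤ h t) (hs : ∀ t, 0 ≤ s t)
    (B0 R : ℝ) (hB0 : 0 ≤ B0) (hR : 0 ≤ R)
    (TL : ℕ) (hTL1 : 1 ≤ TL) (hTL2 : TL ≤ T)
    (t : ℕ) (ht1 : 1 ≤ t) (ht2 : t ≤ T)
    (𝔅 : ℝ)
    (hatt : ∃ y v : ℕ → ℝ, FeasibleSeg 1 t d p c h s R TL B0 y v ∧
      ISeq y v 1 t = 0 ∧ BSeq p h s c R TL y v 1 B0 t = 𝔅)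
    (hbound : ∀ y v : ℕ → ℝ, FeasibleSeg 1 t d p c h s R TL B0 y v →
      ISeq y v 1 t = 0 → BSeq p h s c R TL y v 1 B0 t ≤ 𝔅) :
    sSup {x : EReal | ∃ y v : ℕ → ℝ,
        FeasibleSeg 1 T d p c h s R TL B0 y v ∧ ISeq y v 1 t = 0 ∧
        x = ((BSeq p h s c R TL y v 1 B0 T : ℝ) : EReal)}
      = (𝔅 : EReal) + gVal T d p c h s R TL (T - t) 0 𝔅 := by
  obtain ⟨y1, v1, hfeas1, hI1, hB1⟩ := hatt
  rw [gVal_eq T d p c h s R TL (T - t) (by omega),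
    show T - (T - t) + 1 = t + 1 from by omega]
  apply le_antisymm
  · refine sSup_le ?_
    rintro x ⟨y, v, hfeas, hI0, rfl⟩
    have hpre : FeasibleSeg 1 t d p c h s R TL B0 y v :=
      fun τ h1 h2 => hfeas τ h1 (h2.trans ht2)
    have hBtle : BSeq p h s c R TL y v 1 B0 t ≤ 𝔅 := hbound y v hpre hI0
    set Bt := BSeq p h s c R TL y v 1 B0 t with hBt
    have hz : BSeqI p h s c R TL y v 1 0 B0 t = Bt := by rw [BSeqI_zero]
    have hrest : ∀ n, t ≤ n → BSeqI p h s c R TL y v (t + 1) 0 Bt n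
        = BSeq p h s c R TL y v 1 B0 n := by
      intro n hn
      have h0 := BSeqI_restart p h s c R TL y v (le_refl 1) 0 B0
        (show 1 ≤ t + 1 by omega) n hn
      rw [hI0, add_zero, hz] at h0
      exact h0.trans (BSeqI_zero p h s c R TL y v 1 B0 n)
    have hshift : ∀ n, t ≤ n → BSeqI p h s c R TL y v (t + 1) 0 𝔅 n
        = BSeq p h s c R TL y v 1 B0 n + (𝔅 - Bt) := by
      intro n hn
      rw [show 𝔅 = Bt + (𝔅 - Bt) from by ring, BSeqI_shift, hrest n hn]
      ring
    have hsuf : FeasSegI d p c h s R TL (t + 1) T 0 𝔅 y v := by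
      intro τ h1 h2
      obtain ⟨g1, g2, g3, g4, g5, g6⟩ := hfeas τ (by omega) h2
      have hIτ : ISeq y v (t + 1) τ = ISeq y v 1 τ := by
        have := ISeq_split y v (le_refl 1) (by omega) (show t ≤ τ by omega)
        rw [hI0, zero_add] at this
        exact this.symm
      refine ⟨g1, g2, g3, by rw [zero_add, hIτ]; exact g4, ?_, ?_⟩
      · rw [hshift (τ - 1) (by omega)]
        linarith
      · rw [hshift τ (by omega)]
        linarith
    have hmem : ((BSeqI p h s c R TL y v (t + 1) 0 𝔅 T - 𝔅 : ℝ) : EReal)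
        ∈ {x : EReal | ∃ y' v' : ℕ → ℝ,
          FeasSegI d p c h s R TL (t + 1) T 0 𝔅 y' v' ∧
          x = ((BSeqI p h s c R TL y' v' (t + 1) 0 𝔅 T - 𝔅 : ℝ) : EReal)} :=
      ⟨y, v, hsuf, rfl⟩
    refine le_trans ?_ (add_le_add_right (le_sSup hmem) _)
    rw [hshift T (by omega : t ≤ T), ← EReal.coe_add]
    exact EReal.coe_le_coe_iff.mpr (by linarith)
  · rw [ereal_add_sSup]
    refine sSup_le ?_
    rintro b ⟨x', ⟨y2, v2, hsuf2, rfl⟩, rfl⟩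
    set y : ℕ → ℝ := fun j => if j ≤ t then y1 j else y2 j with hydef
    set v : ℕ → ℝ := fun j => if j ≤ t then v1 j else v2 j with hvdef
    have hag1y : ∀ j, j ≤ t → y j = y1 j := fun j hj => by
      simp only [hydef]; exact if_pos hj
    have hag1v : ∀ j, j ≤ t → v j = v1 j := fun j hj => by
      simp only [hvdef]; exact if_pos hj
    have hag2y : ∀ j, t + 1 ≤ j → y j = y2 j := fun j hj => by
      simp only [hydef]; exact if_neg (by omega)
    have hag2v : ∀ j, t + 1 ≤ j → v j = v2 j := fun j hj => by
      simp only [hvdef]; exact if_neg (by omega)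
    have hIc : ISeq y v 1 t = 0 := by
      rw [ISeq_congr (fun j _ hj => hag1y j hj) (fun j _ hj => hag1v j hj)]
      exact hI1
    have hBc : ∀ n, n ≤ t → BSeqI p h s c R TL y v 1 0 B0 n
        = BSeq p h s c R TL y1 v1 1 B0 n := by
      intro n hn
      rw [BSeqI_congr p h s c R TL 1 0 B0
        (fun j _ hj => hag1y j (hj.trans hn)) (fun j _ hj => hag1v j (hj.trans hn)),
        BSeqI_zero]
    have hBtc : BSeqI p h s c R TL y v 1 0 B0 t = 𝔅 := by
      rw [hBc t le_rfl]; exact hB1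
    have hrest : ∀ n, t ≤ n → BSeqI p h s c R TL y v 1 0 B0 n
        = BSeqI p h s c R TL y2 v2 (t + 1) 0 𝔅 n := by
      intro n hn
      have h0 := BSeqI_restart p h s c R TL y v (le_refl 1) 0 B0
        (show 1 ≤ t + 1 by omega) n hn
      rw [hIc, add_zero, hBtc] at h0
      rw [← h0]
      exact BSeqI_congr p h s c R TL (t + 1) 0 𝔅
        (fun j hj _ => hag2y j hj) (fun j hj _ => hag2v j hj)
    have hfeasc : FeasSegI d p c h s R TL 1 T 0 B0 y v := by
      intro τ h1 h2
      by_cases hτ : τ ≤ t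
      · obtain ⟨g1, g2, g3, g4, g5, g6⟩ := hfeas1 τ h1 hτ
        have hIτ : ISeq y v 1 τ = ISeq y1 v1 1 τ :=
          ISeq_congr (fun j _ hj => hag1y j (hj.trans hτ))
            (fun j _ hj => hag1v j (hj.trans hτ))
        refine ⟨by rw [hag1y τ hτ]; exact g1, by rw [hag1v τ hτ]; exact g2,
          by rw [hag1v τ hτ]; exact g3, by rw [zero_add, hIτ]; exact g4, ?_, ?_⟩
        · rw [hBc (τ - 1) (by omega), hag1y τ hτ]
          exact g5
        · rw [hBc τ hτ]
          exact g6
      · obtain ⟨g1, g2, g3, g4, g5, g6⟩ := hsuf2 τ (by omega) h2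
        have hIτ : ISeq y v 1 τ = ISeq y2 v2 (t + 1) τ := by
          rw [ISeq_split y v (le_refl 1) (by omega) (show t ≤ τ by omega), hIc,
            zero_add]
          exact ISeq_congr (fun j hj _ => hag2y j hj) (fun j hj _ => hag2v j hj)
        refine ⟨by rw [hag2y τ (by omega)]; exact g1,
          by rw [hag2v τ (by omega)]; exact g2,
          by rw [hag2v τ (by omega)]; exact g3,
          by rw [zero_add, hIτ]; linarith, ?_, ?_⟩
        · rw [hrest (τ - 1) (by omega), hag2y τ (by omega)]
          exact g5
        · rw [hrest τ (by omega)]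
          exact g6
    refine le_sSup ⟨y, v, (FeasSegI_zero d p c h s R TL 1 T B0 y v).mp hfeasc,
      hIc, ?_⟩
    show (𝔅 : EReal) + ((BSeqI p h s c R TL y2 v2 (t + 1) 0 𝔅 T - 𝔅 : ℝ) : EReal)
      = ((BSeq p h s c R TL y v 1 B0 T : ℝ) : EReal)
    rw [← BSeqI_zero p h s c R TL y v 1 B0 T, hrest T (by omega), ← EReal.coe_add]
    norm_num
end
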